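/- Let σ₁, σ₂ be real numbers. The series ζ₂^□(σ₁, σ₂) = ∑_{k=2}^∞ (∑_{mn=k, m<n} m^{-σ₁} n^{-σ₂})² converges if and only if σ₂ > 1/2 and σ₁ + σ₂ > 1. -/

import Mathlib

open Complex Filter Asymptotics

/-- The inner sum `∑_{mn = k, m < n} m^{-σ₁} n^{-σ₂}` over factorizations of `k`. -/
noncomputable def boxTerm (σ₁ σ₂ : ℝ) (k : ℕ) : ℝ :=
  ∑ p ∈ (Nat.divisorsAntidiagonal k).filter (fun p => p.1 < p.2),
    (p.1 : ℝ) ^ (-σ₁) * (p.2 : ℝ) ^ (-σ₂)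

/-!
If `m < n`, `mn = k` and `s = min σ₂ ((σ₁ + σ₂) / 2)`, then `m^{-σ₁} n^{-σ₂} ≤ k^{-s}`, so the
inner sum is at most `d(k) k^{-s}`. When `2s > 1` the series `∑ d(k)² k^{-2s}` converges, because
`d(k)² ≤ ∑_{uv = k} d(u) d(v)` and the right-hand side, weighted by `k^{-2s}`, is a Dirichlet
convolution of absolutely summable sequences.

Conversely, the factorization `k = 1 · k` bounds the inner sum below by `k^{-σ₂}`, forcing
`σ₂ > 1/2`. Bounding the square of the inner sum below by the sum of the squares of its terms,
the `m` factorizations `mn` with `m < n ≤ 2m` contribute `≍ m^{1 - 2(σ₁ + σ₂)}` for each `m`,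
forcing `σ₁ + σ₂ > 1`.
-/

open Finset

section FiberSums

variable {ι : Type*} {F : ι → ℝ} {t : ℕ → Finset ι}

theorem summable_sum_finset_iff_summable_indicator (hF : 0 ≤ F)
    (ht : Pairwise fun k l => Disjoint (t k) (t l)) :
    Summable (fun k => ∑ i ∈ t k, F i) ↔ Summable ((⋃ k, (t k : Set ι)).indicator F) := by
  let e : (Σ k, t k) → ι := fun x => x.2
  have he : Function.Injective e := by
    rintro ⟨k, i, hi⟩ ⟨l, j, hj⟩ (rfl : i = j)
    obtain rfl : k = l := by
      by_contra hkl
      exact Finset.disjoint_left.1 (ht hkl) hi hj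
    rfl
  have hrange : ∀ i ∉ Set.range e, (⋃ k, (t k : Set ι)).indicator F i = 0 := by
    refine fun i hi => Set.indicator_of_notMem (fun hmem => hi ?_) _
    obtain ⟨k, hk⟩ := Set.mem_iUnion.1 hmem
    exact ⟨⟨k, i, hk⟩, rfl⟩
  have hcomp : (⋃ k, (t k : Set ι)).indicator F ∘ e = F ∘ e := by
    funext ⟨k, i, hi⟩
    exact Set.indicator_of_mem (Set.mem_iUnion.2 ⟨k, hi⟩) _
  rw [← he.summable_iff hrange, hcomp,
    summable_sigma_of_nonneg (f := F ∘ e) fun _ => hF _]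
  simp only [Function.comp_apply, e, Finset.tsum_subtype (t _) F]
  exact ⟨fun h => ⟨fun _ => Summable.of_finite, h⟩, And.right⟩

end FiberSums

theorem Nat.pairwise_disjoint_divisorsAntidiagonal :
    Pairwise fun k l : ℕ => Disjoint k.divisorsAntidiagonal l.divisorsAntidiagonal := by
  refine fun k l hkl => Finset.disjoint_left.2 fun p hk hl => hkl ?_
  rw [← (Nat.mem_divisorsAntidiagonal.1 hk).1, (Nat.mem_divisorsAntidiagonal.1 hl).1]

theorem summable_sum_divisorsAntidiagonal {a b : ℕ → ℝ} (ha : Summable a) (hb : Summable b)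
    (ha₀ : 0 ≤ a) (hb₀ : 0 ≤ b) :
    Summable fun k : ℕ => ∑ p ∈ k.divisorsAntidiagonal, a p.1 * b p.2 :=
  (summable_sum_finset_iff_summable_indicator (F := fun p : ℕ × ℕ => a p.1 * b p.2)
    (fun p => mul_nonneg (ha₀ p.1) (hb₀ p.2))
    Nat.pairwise_disjoint_divisorsAntidiagonal).2 ((ha.mul_of_nonneg hb ha₀ hb₀).indicator _)

theorem sum_divisorsAntidiagonal_mul_rpow (f g : ℕ → ℝ) (e : ℝ) (k : ℕ) :
    ∑ p ∈ k.divisorsAntidiagonal, f p.1 * (p.1 : ℝ) ^ e * (g p.2 * (p.2 : ℝ) ^ e) =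
      (∑ p ∈ k.divisorsAntidiagonal, f p.1 * g p.2) * (k : ℝ) ^ e := by
  rw [Finset.sum_mul]
  refine Finset.sum_congr rfl fun p hp => ?_
  rw [← (Nat.mem_divisorsAntidiagonal.1 hp).1, Nat.cast_mul,
    Real.mul_rpow (Nat.cast_nonneg _) (Nat.cast_nonneg _)]
  ring

theorem Nat.card_divisorsAntidiagonal (k : ℕ) : #k.divisorsAntidiagonal = #k.divisors := by
  rw [← Nat.map_div_right_divisors, card_map]

theorem summable_card_divisors_mul_rpow {e : ℝ} (he : 1 < e) :
    Summable fun k : ℕ => (#k.divisors : ℝ) * (k : ℝ) ^ (-e) := by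
  have hζ : Summable fun n : ℕ => (n : ℝ) ^ (-e) := Real.summable_nat_rpow.2 (by linarith)
  have hζ₀ : 0 ≤ fun n : ℕ => (n : ℝ) ^ (-e) := fun n => by positivity
  refine (summable_sum_divisorsAntidiagonal hζ hζ hζ₀ hζ₀).congr fun k => ?_
  simpa [Nat.card_divisorsAntidiagonal] using sum_divisorsAntidiagonal_mul_rpow 1 1 (-e) k

theorem summable_sum_card_divisors_mul_card_divisors_mul_rpow {e : ℝ} (he : 1 < e) :
    Summable fun k : ℕ =>
      (∑ p ∈ k.divisorsAntidiagonal, (#p.1.divisors * #p.2.divisors : ℝ)) * (k : ℝ) ^ (-e) := by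
  have hd := summable_card_divisors_mul_rpow he
  have hd₀ : 0 ≤ fun k : ℕ => (#k.divisors : ℝ) * (k : ℝ) ^ (-e) := fun k => by positivity
  exact (summable_sum_divisorsAntidiagonal hd hd hd₀ hd₀).congr
    (sum_divisorsAntidiagonal_mul_rpow (fun n => #n.divisors) (fun n => #n.divisors) (-e))

theorem Nat.card_divisors_sq_le (k : ℕ) :
    #k.divisors ^ 2 ≤ ∑ p ∈ k.divisorsAntidiagonal, #p.1.divisors * #p.2.divisors := by
  rw [sq, ← card_product]
  simp_rw [← card_product]
  rw [← Finset.card_sigma]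
  -- `(x, y) ↦ (x, k / x; gcd x y, y / gcd x y)`: the last entry divides `k / x` as `lcm x y ∣ k`.
  refine card_le_card_of_injOn
    (fun q => ⟨(q.1, k / q.1), (q.1.gcd q.2, q.2 / q.1.gcd q.2)⟩) ?_ ?_
  · rintro ⟨x, y⟩ hxy
    simp only [coe_product, Set.mem_prod, mem_coe, Nat.mem_divisors] at hxy
    obtain ⟨⟨hx, hk⟩, hy, -⟩ := hxy
    have hlcm : x * (y / x.gcd y) ∣ k := by
      rw [← Nat.mul_div_assoc _ (Nat.gcd_dvd_right x y)]
      exact Nat.lcm_dvd hx hy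
    simp only [coe_sigma, Set.mem_sigma_iff, mem_coe, Nat.mem_divisorsAntidiagonal,
      mem_product, Nat.mem_divisors]
    refine ⟨⟨Nat.mul_div_cancel' hx, hk⟩, ⟨Nat.gcd_dvd_left x y, ?_⟩,
      Nat.dvd_div_of_mul_dvd hlcm, ?_⟩
    · exact ne_zero_of_dvd_ne_zero hk hx
    · exact (Nat.div_pos (Nat.le_of_dvd (Nat.pos_of_ne_zero hk) hx)
        (Nat.pos_of_dvd_of_pos hx (Nat.pos_of_ne_zero hk))).ne'
  · rintro ⟨x, y⟩ - ⟨x', y'⟩ - h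
    simp only [Sigma.mk.inj_iff, Prod.mk.injEq, heq_eq_eq] at h
    obtain ⟨⟨rfl, -⟩, hg, hq⟩ := h
    rw [← Nat.mul_div_cancel' (Nat.gcd_dvd_right x y), hq, hg,
      Nat.mul_div_cancel' (Nat.gcd_dvd_right x y')]

theorem rpow_neg_mul_rpow_neg_le {m n s σ₁ σ₂ : ℝ} (hm : 1 ≤ m) (hmn : m ≤ n) (hs₂ : s ≤ σ₂)
    (hs : 2 * s ≤ σ₁ + σ₂) : m ^ (-σ₁) * n ^ (-σ₂) ≤ (m * n) ^ (-s) := by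
  have hm₀ : 0 < m := by linarith
  have hn₀ : 0 < n := by linarith
  calc m ^ (-σ₁) * n ^ (-σ₂) = (m * n) ^ (-s) * (m ^ (s - σ₁) * n ^ (s - σ₂)) := by
        rw [Real.mul_rpow hm₀.le hn₀.le, show -σ₁ = -s + (s - σ₁) by ring,
          show -σ₂ = -s + (s - σ₂) by ring, Real.rpow_add hm₀, Real.rpow_add hn₀]
        ring
    _ ≤ (m * n) ^ (-s) * (m ^ (s - σ₁) * m ^ (s - σ₂)) := by
        have := Real.rpow_le_rpow_of_nonpos hm₀ hmn (show s - σ₂ ≤ 0 by linarith)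
        gcongr
    _ = (m * n) ^ (-s) * m ^ (2 * s - (σ₁ + σ₂)) := by
        rw [← Real.rpow_add hm₀]
        ring_nf
    _ ≤ (m * n) ^ (-s) := by
        refine mul_le_of_le_one_right (by positivity) ?_
        exact Real.rpow_le_one_of_one_le_of_nonpos hm (by linarith)

theorem boxTerm_nonneg (σ₁ σ₂ : ℝ) (k : ℕ) : 0 ≤ boxTerm σ₁ σ₂ k :=
  sum_nonneg fun _ _ => by positivity

theorem boxTerm_le_card_divisors_mul_rpow {s σ₁ σ₂ : ℝ} (hs₂ : s ≤ σ₂) (hs : 2 * s ≤ σ₁ + σ₂)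
    (k : ℕ) : boxTerm σ₁ σ₂ k ≤ #k.divisors * (k : ℝ) ^ (-s) := by
  calc boxTerm σ₁ σ₂ k ≤ ∑ _p ∈ k.divisorsAntidiagonal with _p.1 < _p.2, (k : ℝ) ^ (-s) := by
        refine sum_le_sum fun p hp => ?_
        obtain ⟨hpk, hk⟩ := Nat.mem_divisorsAntidiagonal.1 (mem_filter.1 hp).1
        have hp₁ : 1 ≤ p.1 := Nat.pos_of_ne_zero (left_ne_zero_of_mul (hpk ▸ hk))
        rw [← hpk, Nat.cast_mul]
        exact rpow_neg_mul_rpow_neg_le (by exact_mod_cast hp₁)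
          (by exact_mod_cast (mem_filter.1 hp).2.le) hs₂ hs
    _ ≤ ∑ _p ∈ k.divisorsAntidiagonal, (k : ℝ) ^ (-s) :=
        sum_le_sum_of_subset_of_nonneg (filter_subset _ _) fun _ _ _ => by positivity
    _ = #k.divisors * (k : ℝ) ^ (-s) := by
        rw [sum_const, Nat.card_divisorsAntidiagonal, nsmul_eq_mul]

theorem rpow_neg_le_boxTerm (σ₁ σ₂ : ℝ) {k : ℕ} (hk : 2 ≤ k) :
    (k : ℝ) ^ (-σ₂) ≤ boxTerm σ₁ σ₂ k := by
  have hmem : (1, k) ∈ (Nat.divisorsAntidiagonal k).filter fun p => p.1 < p.2 := by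
    simp only [mem_filter, Nat.mem_divisorsAntidiagonal]
    omega
  simpa [boxTerm] using single_le_sum (f := fun p : ℕ × ℕ => (p.1 : ℝ) ^ (-σ₁) * (p.2 : ℝ) ^ (-σ₂))
    (fun _ _ => by positivity) hmem

theorem mul_rpow_neg_le_rpow_neg_mul_rpow_neg {m n σ₁ σ₂ : ℝ} (hm : 0 < m) (hmn : m ≤ n)
    (hn : n ≤ 2 * m) (hσ₂ : 0 ≤ σ₂) :
    (2 : ℝ) ^ (-σ₂) * m ^ (-(σ₁ + σ₂)) ≤ m ^ (-σ₁) * n ^ (-σ₂) := by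
  calc (2 : ℝ) ^ (-σ₂) * m ^ (-(σ₁ + σ₂)) = m ^ (-σ₁) * (2 * m) ^ (-σ₂) := by
        rw [Real.mul_rpow zero_le_two hm.le, neg_add, Real.rpow_add hm]
        ring
    _ ≤ m ^ (-σ₁) * n ^ (-σ₂) := by
        have := Real.rpow_le_rpow_of_nonpos (hm.trans_le hmn) hn (neg_nonpos.2 hσ₂)
        gcongr

theorem summable_boxTerm_sq {σ₁ σ₂ : ℝ} (hσ₂ : 1 / 2 < σ₂) (hσ : 1 < σ₁ + σ₂) :
    Summable fun k => boxTerm σ₁ σ₂ k ^ 2 := by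
  set s := min σ₂ ((σ₁ + σ₂) / 2)
  have hs : 1 < 2 * s := by
    have := lt_min hσ₂ (show 1 / 2 < (σ₁ + σ₂) / 2 by linarith)
    linarith
  refine (summable_sum_card_divisors_mul_card_divisors_mul_rpow hs).of_nonneg_of_le
    (fun _ => sq_nonneg _) fun k => ?_
  have hs' : 2 * s ≤ σ₁ + σ₂ := by
    have := min_le_right σ₂ ((σ₁ + σ₂) / 2)
    linarith
  have hbox := boxTerm_le_card_divisors_mul_rpow (min_le_left _ _) hs' k
  calc boxTerm σ₁ σ₂ k ^ 2 ≤ (#k.divisors * (k : ℝ) ^ (-s)) ^ 2 :=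
        pow_le_pow_left₀ (boxTerm_nonneg σ₁ σ₂ k) hbox 2
    _ = ((#k.divisors ^ 2 : ℕ) : ℝ) * (k : ℝ) ^ (-(2 * s)) := by
        rw [mul_pow, ← Real.rpow_mul_natCast (Nat.cast_nonneg k)]
        push_cast
        ring_nf
    _ ≤ (∑ p ∈ k.divisorsAntidiagonal, (#p.1.divisors * #p.2.divisors : ℝ)) *
          (k : ℝ) ^ (-(2 * s)) := by
        gcongr
        exact_mod_cast Nat.card_divisors_sq_le k

theorem one_half_lt_of_summable_boxTerm_sq {σ₁ σ₂ : ℝ}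
    (h : Summable fun k => boxTerm σ₁ σ₂ k ^ 2) : 1 / 2 < σ₂ := by
  have hζ : Summable fun k : ℕ => (k : ℝ) ^ (-σ₂ * 2) := by
    refine Summable.of_norm_bounded_eventually_nat h (eventually_atTop.2 ⟨2, fun k hk => ?_⟩)
    rw [Real.norm_of_nonneg (by positivity), show -σ₂ * 2 = -σ₂ * ((2 : ℕ) : ℝ) by norm_num,
      Real.rpow_mul_natCast (Nat.cast_nonneg k)]
    exact pow_le_pow_left₀ (by positivity) (rpow_neg_le_boxTerm σ₁ σ₂ hk) 2
  rw [Real.summable_nat_rpow] at hζ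
  linarith

theorem summable_sum_Ioc_sq_of_summable_boxTerm_sq {σ₁ σ₂ : ℝ}
    (h : Summable fun k => boxTerm σ₁ σ₂ k ^ 2) :
    Summable fun m : ℕ => ∑ n ∈ Ioc m (2 * m), ((m : ℝ) ^ (-σ₁) * (n : ℝ) ^ (-σ₂)) ^ 2 := by
  set F : ℕ × ℕ → ℝ := fun p => ((p.1 : ℝ) ^ (-σ₁) * (p.2 : ℝ) ^ (-σ₂)) ^ 2
  set t : ℕ → Finset (ℕ × ℕ) := fun k => k.divisorsAntidiagonal.filter fun p => p.1 < p.2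
  set G := (⋃ k, (t k : Set (ℕ × ℕ))).indicator F
  have hF : 0 ≤ F := fun _ => sq_nonneg _
  have hG : Summable G := by
    refine (summable_sum_finset_iff_summable_indicator hF fun k l hkl =>
      (Nat.pairwise_disjoint_divisorsAntidiagonal hkl).mono (filter_subset _ _)
        (filter_subset _ _)).1 (h.of_nonneg_of_le (fun _ => sum_nonneg fun _ _ => hF _) ?_)
    exact fun k => sum_sq_le_sq_sum_of_nonneg fun _ _ => by positivity
  have hu := (summable_sum_finset_iff_summable_indicator (t := fun m => {m} ×ˢ Ioc m (2 * m))
    (Set.indicator_nonneg fun p _ => hF p)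
    fun m l hml => disjoint_product.2 (Or.inl (disjoint_singleton.2 hml))).2 (hG.indicator _)
  refine hu.congr fun m => ?_
  rw [sum_product, sum_singleton]
  refine sum_congr rfl fun n hn => Set.indicator_of_mem (Set.mem_iUnion.2 ⟨m * n, ?_⟩) _
  obtain ⟨hmn, hn⟩ := mem_Ioc.1 hn
  exact mem_filter.2
    ⟨Nat.mem_divisorsAntidiagonal.2 ⟨rfl, Nat.mul_ne_zero (by omega) (by omega)⟩, hmn⟩

theorem one_lt_add_of_summable_boxTerm_sq {σ₁ σ₂ : ℝ} (hσ₂ : 0 ≤ σ₂)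
    (h : Summable fun k => boxTerm σ₁ σ₂ k ^ 2) : 1 < σ₁ + σ₂ := by
  have hbound : ∀ m : ℕ, 1 ≤ m → ((2 : ℝ) ^ (-σ₂)) ^ 2 * (m : ℝ) ^ (1 - 2 * (σ₁ + σ₂)) ≤
      ∑ n ∈ Ioc m (2 * m), ((m : ℝ) ^ (-σ₁) * (n : ℝ) ^ (-σ₂)) ^ 2 := by
    intro m hm
    have hm₀ : (0 : ℝ) < m := by exact_mod_cast hm
    calc ((2 : ℝ) ^ (-σ₂)) ^ 2 * (m : ℝ) ^ (1 - 2 * (σ₁ + σ₂))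
        = #(Ioc m (2 * m)) • ((2 : ℝ) ^ (-σ₂) * (m : ℝ) ^ (-(σ₁ + σ₂))) ^ 2 := by
          rw [Nat.card_Ioc, show 2 * m - m = m by omega, nsmul_eq_mul, mul_pow,
            ← Real.rpow_mul_natCast hm₀.le, show 1 - 2 * (σ₁ + σ₂) = 1 + -(σ₁ + σ₂) * 2 by ring,
            Real.rpow_add hm₀, Real.rpow_one]
          push_cast
          ring
      _ ≤ ∑ n ∈ Ioc m (2 * m), ((m : ℝ) ^ (-σ₁) * (n : ℝ) ^ (-σ₂)) ^ 2 := by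
          refine card_nsmul_le_sum _ _ _ fun n hn => ?_
          obtain ⟨hmn, hn⟩ := mem_Ioc.1 hn
          exact pow_le_pow_left₀ (by positivity) (mul_rpow_neg_le_rpow_neg_mul_rpow_neg hm₀
            (by exact_mod_cast hmn.le) (by exact_mod_cast hn) hσ₂) 2
  have hζ : Summable fun m : ℕ => ((2 : ℝ) ^ (-σ₂)) ^ 2 * (m : ℝ) ^ (1 - 2 * (σ₁ + σ₂)) := by
    refine Summable.of_norm_bounded_eventually_nat (summable_sum_Ioc_sq_of_summable_boxTerm_sq h)
      (eventually_atTop.2 ⟨1, fun m hm => ?_⟩)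
    rw [Real.norm_of_nonneg (by positivity)]
    exact hbound m hm
  rw [summable_mul_left_iff (by positivity), Real.summable_nat_rpow] at hζ
  linarith

theorem stmt3 (σ₁ σ₂ : ℝ) :
    Summable (fun k : ℕ => (boxTerm σ₁ σ₂ k) ^ 2) ↔ (1/2 < σ₂ ∧ 1 < σ₁ + σ₂) := by
  refine ⟨fun h => ?_, fun h => summable_boxTerm_sq h.1 h.2⟩
  have hσ₂ := one_half_lt_of_summable_boxTerm_sq h
  exact ⟨hσ₂, one_lt_add_of_summable_boxTerm_sq (by linarith) h⟩
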